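/- arXiv:1501.06495 — 4 statements merged into one kernel-verified Lean document; each statement's English description precedes it below -/
import Mathlib

section
/- If for each letter i ∈ {1,…,d} there exists a word μ_i ∈ Λ* with μ_i i ∉ Λ*, then the product T_{μ_1}^*T_{μ_1} ⋯ T_{μ_d}^*T_{μ_d} equals the rank-one projection P_∅ onto C·e_∅. -/
/-!
`T_μ` sends `e_ν` to `e_{μν}` when `μν ∈ Λ*` and to `0` otherwise, and `μν = μν'` forces
`ν = ν'`; hence `T_μ^* T_μ` is the diagonal projection onto the span of the `e_ν` with
`μν ∈ Λ*`. The product of these diagonal projections is the projection onto the span of the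
`e_ν` with `μ_i ν ∈ Λ*` for every `i`, and `ν = ∅` is the only such word: for `ν = jν'` the word
`μ_j ν` has the factor `μ_j j ∉ Λ*`.
-/

open ContinuousLinearMap

/-- A factorial language on `d` letters: the empty word belongs to it and it is closed
under taking factors (subwords of consecutive letters). -/
def IsFactorialLang {d : ℕ} (Λ : Set (List (Fin d))) : Prop :=
  [] ∈ Λ ∧ ∀ u v w : List (Fin d), u ++ v ++ w ∈ Λ → v ∈ Λ

noncomputable section

variable {d : ℕ} {H : Type*} [NormedAddCommGroup H] [InnerProductSpace ℂ H] [CompleteSpace H]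

/-- The operator `T_μ = T_{μ₁} ⋯ T_{μₙ}` associated with a word `μ`, with `T_∅ = I`. -/
def Tw (T : Fin d → H →L[ℂ] H) : List (Fin d) → H →L[ℂ] H
  | [] => 1
  | i :: μ => T i * Tw T μ

/-- The defining property of the shift operators of the language `Λ` with respect to the
orthonormal (Hilbert) basis `e` indexed by the words of `Λ`:
`T_i e_ν = e_{iν}` if `iν ∈ Λ` and `T_i e_ν = 0` otherwise. -/
def IsShift {d : ℕ} (Λ : Set (List (Fin d))) (e : HilbertBasis {ν : List (Fin d) // ν ∈ Λ} ℂ H)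
    (T : Fin d → H →L[ℂ] H) : Prop :=
  ∀ (i : Fin d) (ν : {ν : List (Fin d) // ν ∈ Λ}),
    (∀ h : (i :: ν.1) ∈ Λ, T i (e ν) = e ⟨i :: ν.1, h⟩) ∧
    ((i :: ν.1) ∉ Λ → T i (e ν) = 0)

theorem IsFactorialLang.mem_of_append_mem_left {Λ : Set (List (Fin d))}
    (hΛ : IsFactorialLang Λ) {u v : List (Fin d)} (h : u ++ v ∈ Λ) : u ∈ Λ :=
  hΛ.2 [] u v (by simpa using h)

theorem IsFactorialLang.mem_of_append_mem_right {Λ : Set (List (Fin d))}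
    (hΛ : IsFactorialLang Λ) {u v : List (Fin d)} (h : u ++ v ∈ Λ) : v ∈ Λ :=
  hΛ.2 u v [] (by simpa using h)

theorem IsFactorialLang.forall_append_mem_iff_eq_nil {Λ : Set (List (Fin d))}
    (hΛ : IsFactorialLang Λ) {μ : Fin d → List (Fin d)} (hμΛ : ∀ i, μ i ∈ Λ)
    (hμi : ∀ i, μ i ++ [i] ∉ Λ) {ν : List (Fin d)} :
    (∀ i, μ i ++ ν ∈ Λ) ↔ ν = [] := by
  refine ⟨fun h => ?_, fun hν i => by simpa [hν] using hμΛ i⟩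
  obtain _ | ⟨j, ν'⟩ := ν
  · rfl
  · exact absurd (hΛ.mem_of_append_mem_left (u := μ j ++ [j]) (v := ν') (by simpa using h j))
      (hμi j)

theorem ContinuousLinearMap.list_prod_map_apply_of_forall_apply_eq_ite {ι R M : Type*}
    [Semiring R] [AddCommMonoid M] [Module R M] [TopologicalSpace M] (l : List ι)
    (A : ι → M →L[R] M) (p : ι → Prop) [DecidablePred p] (x : M)
    (hA : ∀ i, A i x = if p i then x else 0) :
    (l.map A).prod x = if ∀ i ∈ l, p i then x else 0 := by
  induction l with
  | nil => simp
  | cons i l ih =>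
    rw [List.map_cons, List.prod_cons, mul_apply_eq_comp, ih]
    by_cases hl : ∀ j ∈ l, p j
    · simp only [if_pos hl, hA, List.forall_mem_cons, and_iff_left hl]
    · rw [if_neg hl, map_zero, if_neg fun h => hl (List.forall_mem_cons.mp h).2]

variable {𝕜 E ι : Type*} [RCLike 𝕜] [NormedAddCommGroup E] [InnerProductSpace 𝕜 E]

theorem HilbertBasis.ext_inner_left (b : HilbertBasis ι 𝕜 E) {x y : E}
    (h : ∀ i, inner 𝕜 (b i) x = inner 𝕜 (b i) y) : x = y :=
  b.repr.injective <| lp.ext <| funext fun i => by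
    rw [b.repr_apply_apply, b.repr_apply_apply, h i]

theorem HilbertBasis.continuousLinearMap_ext {F : Type*} [NormedAddCommGroup F]
    [NormedSpace 𝕜 F] (b : HilbertBasis ι 𝕜 E) {A B : E →L[𝕜] F}
    (h : ∀ i, A (b i) = B (b i)) : A = B :=
  ContinuousLinearMap.ext_on (Submodule.dense_iff_topologicalClosure_eq_top.mpr b.dense_span)
    (by rintro _ ⟨i, rfl⟩; exact h i)

theorem HilbertBasis.inner_ite_self [DecidableEq ι] (b : HilbertBasis ι 𝕜 E) (P : Prop)
    [Decidable P] (i j : ι) :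
    inner 𝕜 (b j) (if P then b i else 0) = if j = i ∧ P then 1 else 0 := by
  by_cases hP : P <;> simp [hP, orthonormal_iff_ite.mp b.orthonormal]

theorem HilbertBasis.smulRight_innerSL_apply [DecidableEq ι] (b : HilbertBasis ι 𝕜 E) (i j : ι) :
    (innerSL 𝕜 (b i)).smulRight (b i) (b j) = if j = i then b j else 0 := by
  rw [smulRight_apply, innerSL_apply_apply, orthonormal_iff_ite.mp b.orthonormal]
  by_cases hij : j = i
  · simp [hij]
  · simp [hij, Ne.symm hij]

theorem HilbertBasis.adjoint_mul_self_apply_eq_ite [DecidableEq ι] [CompleteSpace E]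
    (b : HilbertBasis ι 𝕜 E) (A : E →L[𝕜] E) (P : Prop) [Decidable P] (i : ι)
    (h : ∀ j, inner 𝕜 (A (b j)) (A (b i)) = if j = i ∧ P then 1 else 0) :
    (adjoint A * A) (b i) = if P then b i else 0 :=
  b.ext_inner_left fun j => by
    rw [mul_apply_eq_comp, adjoint_inner_right, h, b.inner_ite_self]

namespace IsShift

open scoped Classical

variable {Λ : Set (List (Fin d))} {e : HilbertBasis {ν : List (Fin d) // ν ∈ Λ} ℂ H}
  {T : Fin d → H →L[ℂ] H}

omit [CompleteSpace H] in
theorem Tw_apply (hT : IsShift Λ e T) (hΛ : IsFactorialLang Λ) (μ : List (Fin d))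
    (ν : {ν : List (Fin d) // ν ∈ Λ}) :
    Tw T μ (e ν) = if h : μ ++ ν.1 ∈ Λ then e ⟨μ ++ ν.1, h⟩ else 0 := by
  induction μ with
  | nil => simp [Tw]
  | cons i μ ih =>
    rw [Tw, mul_apply_eq_comp, ih]
    by_cases h : μ ++ ν.1 ∈ Λ
    · by_cases hi : i :: (μ ++ ν.1) ∈ Λ
      · simp [h, hi, (hT i ⟨μ ++ ν.1, h⟩).1 hi]
      · simp [h, hi, (hT i ⟨μ ++ ν.1, h⟩).2 hi]
    · have hi : i :: (μ ++ ν.1) ∉ Λ := fun hi => h (hΛ.mem_of_append_mem_right (u := [i]) hi)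
      simp [h, hi]

omit [CompleteSpace H] in
theorem inner_Tw_apply_Tw_apply (hT : IsShift Λ e T) (hΛ : IsFactorialLang Λ)
    (μ : List (Fin d)) (ν ν' : {ν : List (Fin d) // ν ∈ Λ}) :
    inner ℂ (Tw T μ (e ν')) (Tw T μ (e ν)) = if ν' = ν ∧ μ ++ ν.1 ∈ Λ then 1 else 0 := by
  rw [hT.Tw_apply hΛ, hT.Tw_apply hΛ]
  by_cases hν : μ ++ ν.1 ∈ Λ
  · by_cases hν' : μ ++ ν'.1 ∈ Λ
    · simp [hν, hν', orthonormal_iff_ite.mp e.orthonormal, Subtype.ext_iff]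
    · have hne : ν' ≠ ν := fun h => hν' (h ▸ hν)
      simp [hν', hne]
  · simp [hν]

theorem adjoint_Tw_mul_Tw_apply (hT : IsShift Λ e T) (hΛ : IsFactorialLang Λ)
    (μ : List (Fin d)) (ν : {ν : List (Fin d) // ν ∈ Λ}) :
    (adjoint (Tw T μ) * Tw T μ) (e ν) = if μ ++ ν.1 ∈ Λ then e ν else 0 :=
  e.adjoint_mul_self_apply_eq_ite _ _ ν (hT.inner_Tw_apply_Tw_apply hΛ μ ν)

end IsShift

/-- If for each letter `i` there is a word `μ_i ∈ Λ*` with `μ_i i ∉ Λ*`, then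
`T_{μ_1}^*T_{μ_1} ⋯ T_{μ_d}^*T_{μ_d} = P_∅`, the rank-one projection onto `ℂ·e_∅`. -/
theorem stmt9 (Λ : Set (List (Fin d))) (hΛ : IsFactorialLang Λ)
    (e : HilbertBasis {ν : List (Fin d) // ν ∈ Λ} ℂ H)
    (T : Fin d → H →L[ℂ] H) (hT : IsShift Λ e T)
    (μ : Fin d → List (Fin d)) (hμΛ : ∀ i, μ i ∈ Λ) (hμi : ∀ i, μ i ++ [i] ∉ Λ) :
    ((List.finRange d).map fun i => adjoint (Tw T (μ i)) * Tw T (μ i)).prod =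
      (innerSL ℂ (e ⟨[], hΛ.1⟩)).smulRight (e ⟨[], hΛ.1⟩) := by
  refine e.continuousLinearMap_ext fun ν => ?_
  classical
  rw [ContinuousLinearMap.list_prod_map_apply_of_forall_apply_eq_ite _ _ _ _
    fun i => hT.adjoint_Tw_mul_Tw_apply hΛ (μ i) ν, e.smulRight_innerSL_apply]
  simp only [List.mem_finRange, forall_const, hΛ.forall_append_mem_iff_eq_nil hμΛ hμi,
    Subtype.ext_iff]
end
end

section
/- Suppose μ_1,…,μ_n are n ≥ 1 distinct words in Λ*, all of the same length, such that T_{μ_1}^*T_{μ_1}⋯T_{μ_n}^*T_{μ_n} = P_∅. Then the operator T = T_{μ_1} + ⋯ + T_{μ_n} satisfies ‖T‖² = ‖T_{μ_1}^*T_{μ_1} + ⋯ + T_{μ_n}^*T_{μ_n}‖ = n. -/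
/-!
Because the words `μ_i` have equal length, `T_{μ_i}^* T_{μ_j} = 0` for `i ≠ j`, so
`T^* T = ∑ T_{μ_i}^* T_{μ_i}` and the C*-identity gives the first equality. Each
`T_μ^* T_μ` is the orthogonal projection onto the span of the `e_ν` with `μν ∈ Λ*`, so the
sum has norm at most `n`; since every `μ_i ∈ Λ*`, all `n` projections fix `e_∅`, and the sum
maps `e_∅` to `n e_∅`.
-/

open ContinuousLinearMap

open scoped InnerProductSpace

namespace HilbertBasis

variable {ι 𝕜 E F : Type*} [RCLike 𝕜] [NormedAddCommGroup E] [InnerProductSpace 𝕜 E]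

theorem clm_ext [TopologicalSpace F] [AddCommGroup F] [Module 𝕜 F] [T2Space F]
    (b : HilbertBasis ι 𝕜 E) {f g : E →L[𝕜] F} (h : ∀ i, f (b i) = g (b i)) : f = g :=
  ContinuousLinearMap.ext_on (Submodule.dense_iff_topologicalClosure_eq_top.2 b.dense_span)
    (by rintro _ ⟨i, rfl⟩; exact h i)

theorem ext_inner (b : HilbertBasis ι 𝕜 E) {x y : E} (h : ∀ i, ⟪b i, x⟫_𝕜 = ⟪b i, y⟫_𝕜) :
    x = y :=
  b.repr.injective <| lp.ext <| funext fun i => by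
    simp only [b.repr_apply_apply, h i]

end HilbertBasis

theorem star_sum_mul_sum_of_pairwise {ι R : Type*} [NonUnitalNonAssocSemiring R] [StarRing R]
    (s : Finset ι) (a : ι → R) (h : Pairwise fun i j => star (a i) * a j = 0) :
    star (∑ i ∈ s, a i) * ∑ i ∈ s, a i = ∑ i ∈ s, star (a i) * a i := by
  classical
  rw [star_sum, Finset.sum_mul_sum]
  exact Finset.sum_congr rfl fun i hi =>
    Finset.sum_eq_single_of_mem i hi fun j _ hji => h hji.symm

theorem norm_sum_sq_of_pairwise {ι R : Type*} [NonUnitalNormedRing R] [StarRing R] [CStarRing R]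
    (s : Finset ι) (a : ι → R) (h : Pairwise fun i j => star (a i) * a j = 0) :
    ‖∑ i ∈ s, a i‖ ^ 2 = ‖∑ i ∈ s, star (a i) * a i‖ := by
  rw [sq, ← CStarRing.norm_star_mul_self, star_sum_mul_sum_of_pairwise s a h]

theorem IsFactorialLang.mem_of_cons_mem {d : ℕ} {Λ : Set (List (Fin d))} (hΛ : IsFactorialLang Λ)
    {i : Fin d} {w : List (Fin d)} (h : i :: w ∈ Λ) : w ∈ Λ :=
  hΛ.2 [i] w [] (by simpa using h)

section Shift

variable {d : ℕ} {H : Type*} [NormedAddCommGroup H] [InnerProductSpace ℂ H]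
  {Λ : Set (List (Fin d))} {e : HilbertBasis {ν : List (Fin d) // ν ∈ Λ} ℂ H}
  {T : Fin d → H →L[ℂ] H}

open scoped Classical in
theorem Tw_apply_basis (hΛ : IsFactorialLang Λ) (hT : IsShift Λ e T) (μ : List (Fin d))
    (ν : {ν : List (Fin d) // ν ∈ Λ}) :
    Tw T μ (e ν) = if h : μ ++ ν.1 ∈ Λ then e ⟨μ ++ ν.1, h⟩ else 0 := by
  induction μ with
  | nil => simp [Tw]
  | cons i μ ih =>
    change T i (Tw T μ (e ν)) = _
    rw [List.cons_append]
    by_cases hμν : μ ++ ν.1 ∈ Λ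
    · rw [ih, dif_pos hμν]
      by_cases hiμν : i :: (μ ++ ν.1) ∈ Λ
      · rw [(hT i ⟨_, hμν⟩).1 hiμν, dif_pos hiμν]
      · rw [(hT i ⟨_, hμν⟩).2 hiμν, dif_neg hiμν]
    · rw [ih, dif_neg hμν, map_zero, dif_neg (mt hΛ.mem_of_cons_mem hμν)]

open scoped Classical in
theorem inner_Tw_apply_basis (hΛ : IsFactorialLang Λ) (hT : IsShift Λ e T)
    (μ ν : List (Fin d)) (κ α : {ν : List (Fin d) // ν ∈ Λ}) :
    ⟪Tw T μ (e κ), Tw T ν (e α)⟫_ℂ = if μ ++ κ.1 ∈ Λ ∧ μ ++ κ.1 = ν ++ α.1 then 1 else 0 := by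
  rw [Tw_apply_basis hΛ hT, Tw_apply_basis hΛ hT]
  by_cases hμκ : μ ++ κ.1 ∈ Λ
  · by_cases hνα : ν ++ α.1 ∈ Λ
    · rw [dif_pos hμκ, dif_pos hνα, orthonormal_iff_ite.mp e.orthonormal]
      simp only [Subtype.ext_iff, hμκ, true_and]
    · rw [dif_neg hνα, inner_zero_right, if_neg]
      rintro ⟨-, h⟩
      exact hνα (h ▸ hμκ)
  · simp [hμκ]

variable [CompleteSpace H]

theorem adjoint_Tw_mul_Tw_of_ne (hΛ : IsFactorialLang Λ) (hT : IsShift Λ e T)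
    {μ ν : List (Fin d)} (hne : μ ≠ ν) (hlen : μ.length = ν.length) :
    adjoint (Tw T μ) * Tw T ν = 0 :=
  e.clm_ext fun α => e.ext_inner fun κ => by
    rw [mul_apply_eq_comp, adjoint_inner_right, inner_Tw_apply_basis hΛ hT, zero_apply,
      inner_zero_right, if_neg]
    rintro ⟨-, h⟩
    exact hne (List.append_inj h hlen).1

open scoped Classical in
theorem adjoint_Tw_mul_Tw_apply_basis (hΛ : IsFactorialLang Λ) (hT : IsShift Λ e T)
    (μ : List (Fin d)) (α : {ν : List (Fin d) // ν ∈ Λ}) :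
    (adjoint (Tw T μ) * Tw T μ) (e α) = if μ ++ α.1 ∈ Λ then e α else 0 :=
  e.ext_inner fun κ => by
    rw [mul_apply_eq_comp, adjoint_inner_right, inner_Tw_apply_basis hΛ hT]
    simp only [List.append_cancel_left_eq, ← Subtype.ext_iff]
    obtain rfl | hκα := eq_or_ne κ α
    · simp only [and_true]
      split_ifs <;> simp [e.orthonormal.1]
    · rw [if_neg fun h => hκα h.2]
      split_ifs <;> simp [e.orthonormal.2 hκα]

theorem isStarProjection_adjoint_Tw_mul_Tw (hΛ : IsFactorialLang Λ) (hT : IsShift Λ e T)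
    (μ : List (Fin d)) : IsStarProjection (adjoint (Tw T μ) * Tw T μ) where
  isSelfAdjoint := star_eq_adjoint (Tw T μ) ▸ IsSelfAdjoint.star_mul_self _
  isIdempotentElem := e.clm_ext fun α => by
    by_cases h : μ ++ α.1 ∈ Λ <;> simp [adjoint_Tw_mul_Tw_apply_basis hΛ hT, h]

theorem norm_sum_adjoint_Tw_mul_Tw {ι : Type*} [Fintype ι] (hΛ : IsFactorialLang Λ)
    (hT : IsShift Λ e T) {μ : ι → List (Fin d)} (hμΛ : ∀ i, μ i ∈ Λ) :
    ‖∑ i, adjoint (Tw T (μ i)) * Tw T (μ i)‖ = Fintype.card ι := by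
  set A := ∑ i, adjoint (Tw T (μ i)) * Tw T (μ i)
  have hA : A (e ⟨[], hΛ.1⟩) = (Fintype.card ι : ℂ) • e ⟨[], hΛ.1⟩ := by
    simp [A, sum_apply, adjoint_Tw_mul_Tw_apply_basis hΛ hT, hμΛ, Nat.cast_smul_eq_nsmul]
  refine le_antisymm ?_ ?_
  · calc ‖A‖ ≤ ∑ i, ‖adjoint (Tw T (μ i)) * Tw T (μ i)‖ := norm_sum_le _ _
      _ ≤ ∑ _i : ι, (1 : ℝ) := Finset.sum_le_sum fun i _ =>
          (isStarProjection_adjoint_Tw_mul_Tw hΛ hT (μ i)).norm_le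
      _ = Fintype.card ι := by simp
  · simpa [hA, norm_smul, e.orthonormal.1] using A.le_opNorm (e ⟨[], hΛ.1⟩)

end Shift

variable {d : ℕ} {H : Type*} [NormedAddCommGroup H] [InnerProductSpace ℂ H] [CompleteSpace H]

theorem stmt10_general (Λ : Set (List (Fin d))) (hΛ : IsFactorialLang Λ)
    (e : HilbertBasis {ν : List (Fin d) // ν ∈ Λ} ℂ H)
    (T : Fin d → H →L[ℂ] H) (hT : IsShift Λ e T)
    (n : ℕ) (μ : Fin n → List (Fin d))
    (hμΛ : ∀ i, μ i ∈ Λ) (hdist : Function.Injective μ)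
    (hlen : ∀ i j, (μ i).length = (μ j).length) :
    ‖∑ i, Tw T (μ i)‖ ^ 2 = ‖∑ i, adjoint (Tw T (μ i)) * Tw T (μ i)‖ ∧
    ‖∑ i, Tw T (μ i)‖ ^ 2 = (n : ℝ) := by
  have horth : Pairwise fun i j => star (Tw T (μ i)) * Tw T (μ j) = 0 := fun i j hij => by
    simpa only [star_eq_adjoint] using adjoint_Tw_mul_Tw_of_ne hΛ hT (hdist.ne hij) (hlen i j)
  have hS : ‖∑ i, Tw T (μ i)‖ ^ 2 = ‖∑ i, adjoint (Tw T (μ i)) * Tw T (μ i)‖ := by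
    simpa only [star_eq_adjoint] using norm_sum_sq_of_pairwise Finset.univ _ horth
  exact ⟨hS, by rw [hS, norm_sum_adjoint_Tw_mul_Tw hΛ hT hμΛ, Fintype.card_fin]⟩

/-- If `μ_1, …, μ_n` (`n ≥ 1`) are distinct words in `Λ*` of the same length whose
projections multiply to `P_∅`, then `T = T_{μ_1} + ⋯ + T_{μ_n}` satisfies
`‖T‖² = ‖T_{μ_1}^*T_{μ_1} + ⋯ + T_{μ_n}^*T_{μ_n}‖ = n`. -/
theorem stmt10 (Λ : Set (List (Fin d))) (hΛ : IsFactorialLang Λ)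
    (e : HilbertBasis {ν : List (Fin d) // ν ∈ Λ} ℂ H)
    (T : Fin d → H →L[ℂ] H) (hT : IsShift Λ e T)
    (n : ℕ) (hn : 1 ≤ n) (μ : Fin n → List (Fin d))
    (hμΛ : ∀ i, μ i ∈ Λ) (hdist : Function.Injective μ)
    (hlen : ∀ i j, (μ i).length = (μ j).length)
    (hprod : (List.ofFn fun i => adjoint (Tw T (μ i)) * Tw T (μ i)).prod =
      (innerSL ℂ (e ⟨[], hΛ.1⟩)).smulRight (e ⟨[], hΛ.1⟩)) :
    ‖∑ i, Tw T (μ i)‖ ^ 2 = ‖∑ i, adjoint (Tw T (μ i)) * Tw T (μ i)‖ ∧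
    ‖∑ i, Tw T (μ i)‖ ^ 2 = (n : ℝ) :=
  stmt10_general Λ hΛ e T hT n μ hμΛ hdist hlen
end

section
/- Let X be a locally compact Hausdorff space, x ∈ X, and let D : C_0(X; ℂ) → ℂ be a linear map satisfying D(fg) = f(x)D(g) + D(f)g(x) for all f, g ∈ C_0(X) (a point derivation at x, not assumed continuous). Then D = 0. -/
open scoped ZeroAtInfty

/-!
Any `f` vanishing at the point `x` factors as `f = g * h` with `g, h` both vanishing at `x`
(take `h = √|f|` and `g = f / √|f|`), so the derivation rule gives
`D f = g x * D h + D g * h x = 0`.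
For arbitrary `f`, the element `f * f - f x • f` vanishes at `x`, whence `f x * D f = 0`:
either `f x = 0`, and then `D f = 0` by the first case, or `D f = 0` directly.
-/

section PointDerivation

variable {R A : Type*} [CommRing R] [NonUnitalRing A] [Module R A]

def IsPointDerivation (χ : A →ₙₐ[R] R) (D : A →ₗ[R] R) : Prop :=
  ∀ a b, D (a * b) = χ a * D b + D a * χ b

namespace IsPointDerivation

variable {χ : A →ₙₐ[R] R} {D : A →ₗ[R] R}

theorem map_mul_eq_zero (hD : IsPointDerivation χ D) {a b : A} (ha : χ a = 0) (hb : χ b = 0) :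
    D (a * b) = 0 := by
  rw [hD, ha, hb, zero_mul, mul_zero, add_zero]

theorem apply_mul_map_self_eq_zero (hD : IsPointDerivation χ D)
    (hfac : ∀ a, χ a = 0 → ∃ b c, χ b = 0 ∧ χ c = 0 ∧ b * c = a) (a : A) :
    χ a * D a = 0 := by
  have hker : χ (a * a - χ a • a) = 0 := by
    rw [map_sub, map_mul, map_smul, smul_eq_mul, sub_self]
  obtain ⟨b, c, hb, hc, hbc⟩ := hfac _ hker
  have := hD.map_mul_eq_zero hb hc
  rw [hbc, map_sub, map_smul, hD, smul_eq_mul] at this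
  linear_combination this

theorem eq_zero [NoZeroDivisors R] (hD : IsPointDerivation χ D)
    (hfac : ∀ a, χ a = 0 → ∃ b c, χ b = 0 ∧ χ c = 0 ∧ b * c = a) : D = 0 := by
  ext a
  rcases mul_eq_zero.mp (hD.apply_mul_map_self_eq_zero hfac a) with hχa | hDa
  · obtain ⟨b, c, hb, hc, rfl⟩ := hfac a hχa
    exact hD.map_mul_eq_zero hb hc
  · exact hDa

end IsPointDerivation

end PointDerivation

namespace RCLike

variable {𝕜 : Type*} [RCLike 𝕜]

noncomputable def divSqrtNorm (z : 𝕜) : 𝕜 := z / (√‖z‖ : 𝕜)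

@[simp]
theorem divSqrtNorm_zero : divSqrtNorm (0 : 𝕜) = 0 := by
  simp [divSqrtNorm]

theorem norm_divSqrtNorm (z : 𝕜) : ‖divSqrtNorm z‖ = √‖z‖ := by
  rw [divSqrtNorm, norm_div, norm_ofReal, abs_of_nonneg (Real.sqrt_nonneg _), Real.div_sqrt]

theorem divSqrtNorm_mul_sqrt_norm (z : 𝕜) : divSqrtNorm z * (√‖z‖ : 𝕜) = z := by
  rcases eq_or_ne z 0 with rfl | hz
  · simp
  · have : (√‖z‖ : 𝕜) ≠ 0 := by simpa using hz
    exact div_mul_cancel₀ z this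

theorem continuous_divSqrtNorm : Continuous (divSqrtNorm : 𝕜 → 𝕜) := by
  have hsqrt : Continuous fun z : 𝕜 => √‖z‖ := by fun_prop
  refine continuous_iff_continuousAt.mpr fun z => ?_
  rcases eq_or_ne z 0 with rfl | hz
  · rw [ContinuousAt, divSqrtNorm_zero, tendsto_zero_iff_norm_tendsto_zero]
    simpa [norm_divSqrtNorm] using hsqrt.tendsto 0
  · exact continuousAt_id.div (continuous_ofReal.comp hsqrt).continuousAt (by simpa using hz)

end RCLike

namespace ZeroAtInftyContinuousMap

variable {X : Type*} [TopologicalSpace X]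

section CompLeft

variable {β γ : Type*} [TopologicalSpace β] [Zero β] [TopologicalSpace γ] [Zero γ]

def compLeft (φ : C(β, γ)) (hφ : φ 0 = 0) (f : C₀(X, β)) : C₀(X, γ) where
  toContinuousMap := φ.comp f
  zero_at_infty' := hφ ▸ (φ.continuous.tendsto 0).comp (zero_at_infty f)

@[simp]
theorem compLeft_apply (φ : C(β, γ)) (hφ : φ 0 = 0) (f : C₀(X, β)) (y : X) :
    compLeft φ hφ f y = φ (f y) :=
  rfl

end CompLeft

def evalₙₐ {𝕜 : Type*} [CommSemiring 𝕜] [TopologicalSpace 𝕜] [IsTopologicalSemiring 𝕜]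
    (x : X) : C₀(X, 𝕜) →ₙₐ[𝕜] 𝕜 where
  toFun f := f x
  map_smul' _ _ := rfl
  map_zero' := rfl
  map_add' _ _ := rfl
  map_mul' _ _ := rfl

theorem exists_mul_eq_of_apply_eq_zero {𝕜 : Type*} [RCLike 𝕜] {f : C₀(X, 𝕜)} {x : X}
    (hf : f x = 0) : ∃ g h : C₀(X, 𝕜), g x = 0 ∧ h x = 0 ∧ g * h = f := by
  let g := compLeft ⟨RCLike.divSqrtNorm, RCLike.continuous_divSqrtNorm⟩ RCLike.divSqrtNorm_zero f
  let h := compLeft ⟨fun z : 𝕜 => (√‖z‖ : 𝕜), by fun_prop⟩ (by simp) f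
  refine ⟨g, h, by simp [g, hf], by simp [h, hf], ?_⟩
  ext y
  exact RCLike.divSqrtNorm_mul_sqrt_norm (f y)

end ZeroAtInftyContinuousMap

theorem stmt13_general {X : Type*} [TopologicalSpace X]
    (x : X) (D : C₀(X, ℂ) →ₗ[ℂ] ℂ)
    (hD : ∀ f g : C₀(X, ℂ), D (f * g) = f x * D g + D f * g x) :
    D = 0 :=
  IsPointDerivation.eq_zero (show IsPointDerivation (ZeroAtInftyContinuousMap.evalₙₐ x) D from hD)
    fun _ hf => ZeroAtInftyContinuousMap.exists_mul_eq_of_apply_eq_zero hf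

/-- A (not necessarily continuous) point derivation at a point `x` of a locally compact
Hausdorff space `X` on `C₀(X, ℂ)` is zero. -/
theorem stmt13 {X : Type*} [TopologicalSpace X] [LocallyCompactSpace X] [T2Space X]
    (x : X) (D : C₀(X, ℂ) →ₗ[ℂ] ℂ)
    (hD : ∀ f g : C₀(X, ℂ), D (f * g) = f x * D g + D f * g x) :
    D = 0 :=
  stmt13_general x D hD
end

section
/- (Sinclair stability lemma) Let φ : A → B be a surjective algebra homomorphism between Banach algebras, and let S(φ) = {b ∈ B : ∃ (a_n) in A with a_n → 0 and φ(a_n) → b} be its separating space. Then for every sequence (b_n) in B there exists N ∈ ℕ such that the closure of b_1 b_2 ⋯ b_n S(φ) equals the closure of b_1 b_2 ⋯ b_N S(φ) for all n ≥ N, and likewise the closure of S(φ) b_n b_{n−1} ⋯ b_1 equals the closure of S(φ) b_N b_{N−1} ⋯ b_1 for all n ≥ N. -/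
/-!
The separating space `𝔖(θ)` of a linear map `θ : E → F` of Banach spaces is the fibre over `0` of
the closure of its graph. By the closed graph theorem `θ` followed by `F → F ⧸ 𝔖(θ)` is continuous,
so `P ∘ θ` is continuous for every continuous `P` vanishing on `𝔖(θ)`, while `P ∘ θ` is unbounded
near `0` as soon as `P` does not vanish on `𝔖(θ)`.

Let `θ T_n = R_n θ` with `T_n, R_n` continuous, and `G_n` the closure of `R_1 ⋯ R_n 𝔖(θ)`. These
form a decreasing chain. If it did not stabilise, along a subsequence `n_k` the quotient map `q_k`
by `G_{n_{k+1}}` would make `q_k R_1 ⋯ R_{n_{k+1}} θ` continuous but `q_k R_1 ⋯ R_{n_k} θ`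
unbounded, and a gliding hump `∑ T_1 ⋯ T_{n_k} x_k` would give an `x` with `‖θ x‖ ≥ k` for all
`k`. For a surjective homomorphism `φ`, left (right) multiplication by preimages of the `b_i`
intertwines with left (right) multiplication by the `b_i`.
-/

open Filter Topology

namespace LinearMap

variable {𝕜 E F : Type*} [NontriviallyNormedField 𝕜]
  [NormedAddCommGroup E] [NormedSpace 𝕜 E] [NormedAddCommGroup F] [NormedSpace 𝕜 F]

def separatingSpace (θ : E →ₗ[𝕜] F) : Submodule 𝕜 F :=
  θ.graph.topologicalClosure.comap (LinearMap.inr 𝕜 E F)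

variable {θ : E →ₗ[𝕜] F}

theorem mem_separatingSpace_iff {y : F} :
    y ∈ θ.separatingSpace ↔
      ∃ x : ℕ → E, Tendsto x atTop (𝓝 0) ∧ Tendsto (fun n => θ (x n)) atTop (𝓝 y) := by
  rw [separatingSpace, Submodule.mem_comap, inr_apply, ← SetLike.mem_coe,
    Submodule.topologicalClosure_coe, mem_closure_iff_seq_limit]
  simp only [nhds_prod_eq, tendsto_prod_iff']
  constructor
  · rintro ⟨p, hp, hx, hy⟩
    refine ⟨Prod.fst ∘ p, hx, ?_⟩
    convert hy using 1
    funext n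
    exact ((mem_graph_iff _ _).1 (hp n)).symm
  · rintro ⟨x, hx, hy⟩
    exact ⟨fun n => (x n, θ (x n)), fun n => (mem_graph_iff _ _).2 rfl, hx, hy⟩

theorem isClosed_separatingSpace (θ : E →ₗ[𝕜] F) : IsClosed (θ.separatingSpace : Set F) :=
  θ.graph.isClosed_topologicalClosure.preimage (continuous_const.prodMk continuous_id)

theorem mem_closure_graph_iff {x : E} {y : F} :
    (x, y) ∈ closure (θ.graph : Set (E × F)) ↔ y - θ x ∈ θ.separatingSpace := by
  have hgraph : (x, θ x) ∈ θ.graph.topologicalClosure :=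
    θ.graph.le_topologicalClosure ((mem_graph_iff _ _).2 rfl)
  rw [separatingSpace, Submodule.mem_comap, inr_apply, ← Submodule.topologicalClosure_coe,
    SetLike.mem_coe]
  constructor
  · intro h
    simpa using Submodule.sub_mem _ h hgraph
  · intro h
    simpa using Submodule.add_mem _ h hgraph

theorem continuous_mkQ_comp [CompleteSpace E] [CompleteSpace F] (θ : E →ₗ[𝕜] F) :
    Continuous (θ.separatingSpace.mkQ ∘ₗ θ) := by
  have : IsClosed (θ.separatingSpace : Set F) := θ.isClosed_separatingSpace
  refine (θ.separatingSpace.mkQ ∘ₗ θ).continuous_of_isClosed_graph ?_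
  have hΦ : IsOpenQuotientMap (Prod.map (_root_.id : E → E) θ.separatingSpace.mkQ) :=
    IsOpenQuotientMap.id.prodMap θ.separatingSpace.isOpenQuotientMap_mkQ
  rw [← hΦ.isQuotientMap.isClosed_preimage]
  convert isClosed_closure (s := (θ.graph : Set (E × F)))
  ext ⟨x, y⟩
  simp [mem_closure_graph_iff, Submodule.Quotient.eq, mem_graph_iff]

theorem continuous_comp_of_separatingSpace_le_ker [CompleteSpace E] [CompleteSpace F]
    {H : Type*} [TopologicalSpace H] [AddCommGroup H] [Module 𝕜 H] (P : F →L[𝕜] H)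
    (hP : θ.separatingSpace ≤ LinearMap.ker (P : F →ₗ[𝕜] H)) : Continuous (P ∘ θ) :=
  (θ.separatingSpace.liftQL P hP).continuous.comp θ.continuous_mkQ_comp

theorem exists_mem_lt_norm_of_mem_separatingSpace {H : Type*} [SeminormedAddCommGroup H]
    [NormedSpace 𝕜 H] (P : F →L[𝕜] H) {y : F} (hy : y ∈ θ.separatingSpace) (hPy : 0 < ‖P y‖)
    {V : Set E} (hV : V ∈ 𝓝 0) (M : ℝ) : ∃ x ∈ V, M < ‖P (θ x)‖ := by
  obtain ⟨x, hx, hθx⟩ := mem_separatingSpace_iff.1 hy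
  obtain ⟨t, ht⟩ := NormedField.exists_lt_norm 𝕜 (M / ‖P y‖)
  have hsmall : ∀ᶠ n in atTop, t • x n ∈ V := by
    have hlim := hx.const_smul t
    rw [smul_zero] at hlim
    exact hlim hV
  have hlarge : ∀ᶠ n in atTop, M < ‖P (θ (t • x n))‖ := by
    have hlim : Tendsto (fun n => ‖P (θ (t • x n))‖) atTop (𝓝 (‖t‖ * ‖P y‖)) := by
      simp only [map_smul, norm_smul]
      exact ((P.continuous.tendsto y).comp hθx).norm.const_mul ‖t‖
    exact hlim.eventually_const_lt (by rwa [div_lt_iff₀ hPy] at ht)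
  obtain ⟨n, hnV, hnM⟩ := (hsmall.and hlarge).exists
  exact ⟨t • x n, hnV, hnM⟩

theorem apply_mem_separatingSpace {T : E →L[𝕜] E} {R : F →L[𝕜] F}
    (h : ∀ x, θ (T x) = R (θ x)) {y : F} (hy : y ∈ θ.separatingSpace) :
    R y ∈ θ.separatingSpace := by
  obtain ⟨x, hx, hθx⟩ := mem_separatingSpace_iff.1 hy
  refine mem_separatingSpace_iff.2 ⟨T ∘ x, ?_, ?_⟩
  · simpa using (T.continuous.tendsto 0).comp hx
  · simpa only [Function.comp_def, h] using (R.continuous.tendsto y).comp hθx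

end LinearMap

section GlidingHump

variable {𝕜 E : Type*} [NontriviallyNormedField 𝕜] [NormedAddCommGroup E] [NormedSpace 𝕜 E]

theorem exists_norm_le_two_hasSum_apply_add_sum [CompleteSpace E] {U : ℕ → E →L[𝕜] E}
    {r : ℕ → ℕ → E →L[𝕜] E} (hr : ∀ i j, i ≤ j → U j = U i * r i j) {x : ℕ → E}
    (hx : ∀ i j, i ≤ j → ‖r i j (x j)‖ ≤ (1 / 2) ^ j) (k : ℕ) :
    ∃ w : E, ‖w‖ ≤ 2 ∧
      HasSum (fun j => U j (x j)) (U k w + ∑ j ∈ Finset.range k, U j (x j)) := by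
  have hbound : ∀ m, ‖r k (m + k) (x (m + k))‖ ≤ (1 / 2) ^ m := fun m =>
    (hx k (m + k) (by omega)).trans (pow_le_pow_of_le_one (by norm_num) (by norm_num) (by omega))
  have hsum : Summable fun m => r k (m + k) (x (m + k)) :=
    .of_norm_bounded summable_geometric_two hbound
  refine ⟨_, tsum_of_norm_bounded hasSum_geometric_two hbound, ?_⟩
  rw [← hasSum_nat_add_iff]
  convert hsum.hasSum.mapL (U k) using 2 with m
  rw [hr k (m + k) (by omega)]
  rfl

theorem gliding_hump [CompleteSpace E] {F : Type*} [SeminormedAddCommGroup F] [Module 𝕜 F]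
    {H : ℕ → Type*} [∀ k, SeminormedAddCommGroup (H k)] [∀ k, NormedSpace 𝕜 (H k)]
    (θ : E →ₗ[𝕜] F) (P : ∀ k, F →ₗ[𝕜] H k) (hP : ∀ k y, ‖P k y‖ ≤ ‖y‖)
    (U : ℕ → E →L[𝕜] E) (hU : ∀ i j, i ≤ j → U i ∣ U j)
    (hcont : ∀ k, Continuous fun x => P k (θ (U (k + 1) x)))
    (hunbdd : ∀ k, ∀ V ∈ 𝓝 (0 : E), ∀ M : ℝ, ∃ x ∈ V, M < ‖P k (θ (U k x))‖) : False := by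
  choose! r hr using hU
  have hbdd : ∀ k, ∃ C, 0 ≤ C ∧ ∀ w, ‖P k (θ (U (k + 1) w))‖ ≤ C * ‖w‖ := fun k =>
    let L : E →L[𝕜] H k := ⟨P k ∘ₗ θ ∘ₗ (U (k + 1)).toLinearMap, hcont k⟩
    ⟨‖L‖, norm_nonneg L, L.le_opNorm⟩
  choose C hC₀ hC using hbdd
  have hsmall : ∀ j, ∀ᶠ x in 𝓝 (0 : E), ∀ i ∈ {i | i ≤ j}, ‖r i j x‖ < (1 / 2) ^ j := fun j =>
    (eventually_all_finite (Set.finite_le_nat j)).2 fun i _ =>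
      ((r i j).continuous.tendsto' 0 0 (map_zero _)).norm.eventually_lt_const (by norm_num)
  choose pick hpick_small hpick_large using fun k M => hunbdd k _ (hsmall k) M
  -- `x k` must outweigh the earlier humps (`σ k`) and the tail beyond it (`2 * C k`)
  let σ : ℕ → ℝ := fun k => Nat.rec 0 (fun k s => s + ‖θ (U k (pick k (k + s + 2 * C k)))‖) k
  let x : ℕ → E := fun k => pick k (k + σ k + 2 * C k)
  have hσ : ∀ k, σ k = ∑ j ∈ Finset.range k, ‖θ (U j (x j))‖ := by
    intro k
    induction k with
    | zero => rfl
    | succ k ih => rw [Finset.sum_range_succ, ← ih]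
  have hx : ∀ i j, i ≤ j → ‖r i j (x j)‖ ≤ (1 / 2) ^ j := fun i j hij =>
    (hpick_small j _ i hij).le
  set X := ∑' j, U j (x j)
  have hX : ∀ k, ∃ w : E, ‖w‖ ≤ 2 ∧ X = U k w + ∑ j ∈ Finset.range k, U j (x j) := fun k =>
    (exists_norm_le_two_hasSum_apply_add_sum hr hx k).imp fun _ hw => ⟨hw.1, hw.2.tsum_eq⟩
  have hle : ∀ k : ℕ, k < ‖θ X‖ := by
    intro k
    obtain ⟨w, hw, hXw⟩ := hX (k + 1)
    have hPX : P k (θ (U k (x k))) = P k (θ X) -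
        ∑ j ∈ Finset.range k, P k (θ (U j (x j))) - P k (θ (U (k + 1) w)) := by
      rw [hXw, Finset.sum_range_succ]
      simp only [map_add, map_sum]
      abel
    have hhead : ‖∑ j ∈ Finset.range k, P k (θ (U j (x j)))‖ ≤ σ k :=
      hσ k ▸ (norm_sum_le _ _).trans (Finset.sum_le_sum fun j _ => hP k _)
    have htail : ‖P k (θ (U (k + 1) w))‖ ≤ 2 * C k := by nlinarith [hC k w, hC₀ k]
    have hhump : ‖P k (θ (U k (x k)))‖ ≤ ‖θ X‖ + σ k + 2 * C k := by
      rw [hPX]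
      refine (norm_sub_le _ _).trans (add_le_add ((norm_sub_le _ _).trans ?_) htail)
      exact add_le_add (hP k _) hhead
    linarith [hpick_large k (k + σ k + 2 * C k)]
  obtain ⟨k, hk⟩ := exists_nat_gt ‖θ X‖
  exact (hle k).not_gt hk

end GlidingHump

theorem List.prod_range_dvd_prod_range {M : Type*} [Monoid M] (f : ℕ → M) {m n : ℕ}
    (hmn : m ≤ n) : ((List.range m).map f).prod ∣ ((List.range n).map f).prod := by
  induction n, hmn using Nat.le_induction with
  | base => rfl
  | succ n _ ih =>
    rw [List.prod_range_succ]
    exact dvd_mul_of_dvd_left ih _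

section Stability

variable {𝕜 E F : Type*} [NontriviallyNormedField 𝕜] [NormedAddCommGroup E] [NormedSpace 𝕜 E]
  [NormedAddCommGroup F] [NormedSpace 𝕜 F]

theorem LinearMap.apply_prod_range_map {θ : E →ₗ[𝕜] F} {T : ℕ → E →L[𝕜] E}
    {R : ℕ → F →L[𝕜] F} (h : ∀ n x, θ (T n x) = R n (θ x)) (n : ℕ) (x : E) :
    θ (((List.range n).map T).prod x) = ((List.range n).map R).prod (θ x) := by
  induction n generalizing x with
  | zero => rfl
  | succ n ih =>
    rw [List.prod_range_succ, List.prod_range_succ]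
    exact (ih (T n x)).trans (congrArg _ (h n x))

theorem LinearMap.eventuallyConst_closure_image_separatingSpace [CompleteSpace E]
    [CompleteSpace F] (θ : E →ₗ[𝕜] F) (T : ℕ → E →L[𝕜] E) (R : ℕ → F →L[𝕜] F)
    (h : ∀ n x, θ (T n x) = R n (θ x)) :
    EventuallyConst (fun n => closure (((List.range n).map R).prod '' θ.separatingSpace))
      atTop := by
  set S := θ.separatingSpace
  set Rp : ℕ → F →L[𝕜] F := fun n => ((List.range n).map R).prod
  let G : ℕ → Submodule 𝕜 F := fun n => (S.map (Rp n : F →ₗ[𝕜] F)).topologicalClosure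
  have hG : ∀ n, (G n : Set F) = closure (Rp n '' S) := fun _ => rfl
  have hanti : Antitone G := antitone_nat_of_succ_le fun n =>
    Submodule.topologicalClosure_mono <| by
      rintro _ ⟨y, hy, rfl⟩
      exact ⟨R n y, apply_mem_separatingSpace (h n) hy, by simp [Rp, List.prod_range_succ]⟩
  suffices EventuallyConst G atTop from (this.comp SetLike.coe).congr (.of_forall hG)
  by_contra hcon
  simp only [eventuallyConst_atTop, not_exists, not_forall] at hcon
  choose f hf_ge hf_ne using hcon
  let n : ℕ → ℕ := fun k => f^[k] 0
  have hn_succ : ∀ k, n (k + 1) = f (n k) := fun k => Function.iterate_succ_apply' f k 0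
  have hn_mono : Monotone n := monotone_nat_of_le_succ fun k => hn_succ k ▸ hf_ge _
  have hstrict : ∀ k, ¬ S.map (Rp (n k) : F →ₗ[𝕜] F) ≤ G (n (k + 1)) := fun k hle =>
    hf_ne (n k) <| by
      rw [← hn_succ]
      exact le_antisymm (hanti (hn_mono k.le_succ))
        (Submodule.topologicalClosure_minimal _ hle (Submodule.isClosed_topologicalClosure _))
  have hTR := θ.apply_prod_range_map h
  refine gliding_hump θ (fun k => (G (n (k + 1))).mkQ) (fun k => Submodule.Quotient.norm_mk_le _)
    (fun k => ((List.range (n k)).map T).prod)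
    (fun i j hij => List.prod_range_dvd_prod_range T (hn_mono hij)) (fun k => ?_) (fun k => ?_)
  · simp only [hTR]
    refine continuous_comp_of_separatingSpace_le_ker ((G (n (k + 1))).mkQL ∘L Rp (n (k + 1))) ?_
    intro y hy
    exact (Submodule.Quotient.mk_eq_zero _).2 (Submodule.le_topologicalClosure _ ⟨y, hy, rfl⟩)
  · obtain ⟨_, ⟨y, hy, rfl⟩, hy_not⟩ := SetLike.not_le_iff_exists.1 (hstrict k)
    have hpos : 0 < ‖(G (n (k + 1))).mkQL (Rp (n k) y)‖ := by
      refine (norm_nonneg _).lt_of_ne' fun h0 => hy_not ?_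
      exact (Submodule.isClosed_topologicalClosure _).closure_subset
        (QuotientAddGroup.norm_mk_eq_zero_iff_mem_closure.1 h0)
    intro V hV M
    simp only [hTR]
    exact exists_mem_lt_norm_of_mem_separatingSpace ((G (n (k + 1))).mkQL ∘L Rp (n k)) hy hpos
      hV M

end Stability

namespace ContinuousLinearMap

variable {𝕜 B ι : Type*} [NontriviallyNormedField 𝕜] [NormedRing B] [NormedAlgebra 𝕜 B]

theorem coe_list_prod_map_mul (f : ι → B) (l : List ι) :
    ⇑(l.map fun i => mul 𝕜 B (f i)).prod = fun y => (l.map f).prod * y := by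
  induction l with
  | nil => ext; simp
  | cons i l ih => ext; simp [mul_apply_eq_comp, ih, mul_assoc]

theorem coe_list_prod_map_flip_mul (f : ι → B) (l : List ι) :
    ⇑(l.map fun i => (mul 𝕜 B).flip (f i)).prod = fun y => y * (l.map f).reverse.prod := by
  induction l with
  | nil => ext; simp
  | cons i l ih => ext; simp [mul_apply_eq_comp, ih, mul_assoc]

end ContinuousLinearMap

/-- (Sinclair stability lemma) Let `φ : A → B` be a surjective algebra homomorphism of
Banach algebras and `S(φ)` its separating space. For every sequence `(b_n)` in `B` there
is an `N` such that for all `n ≥ N` the closure of `b_1 b_2 ⋯ b_n S(φ)` equals the closure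
of `b_1 b_2 ⋯ b_N S(φ)`, and the closure of `S(φ) b_n b_{n-1} ⋯ b_1` equals the closure of
`S(φ) b_N b_{N-1} ⋯ b_1`. -/
theorem stmt15 {A B : Type*} [NormedRing A] [NormedAlgebra ℂ A] [CompleteSpace A]
    [NormedRing B] [NormedAlgebra ℂ B] [CompleteSpace B]
    (φ : A →ₐ[ℂ] B) (hφ : Function.Surjective φ)
    (S : Set B)
    (hS : S = {b : B | ∃ a : ℕ → A, Tendsto a atTop (nhds 0) ∧
      Tendsto (fun n => φ (a n)) atTop (nhds b)})
    (b : ℕ → B) :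
    ∃ N : ℕ, ∀ n ≥ N,
      closure ((fun s => ((List.range n).map b).prod * s) '' S) =
        closure ((fun s => ((List.range N).map b).prod * s) '' S) ∧
      closure ((fun s => s * ((List.range n).map b).reverse.prod) '' S) =
        closure ((fun s => s * ((List.range N).map b).reverse.prod) '' S) := by
  choose a ha using fun i => hφ (b i)
  have hS' : S = φ.toLinearMap.separatingSpace :=
    hS.trans (Set.ext fun _ => (LinearMap.mem_separatingSpace_iff (θ := φ.toLinearMap)).symm)
  have hleft := φ.toLinearMap.eventuallyConst_closure_image_separatingSpace
    (fun i => .mul ℂ A (a i)) (fun i => .mul ℂ B (b i)) fun _ _ => by simp [ha]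
  have hright := φ.toLinearMap.eventuallyConst_closure_image_separatingSpace
    (fun i => (ContinuousLinearMap.mul ℂ A).flip (a i))
    (fun i => (ContinuousLinearMap.mul ℂ B).flip (b i)) fun _ _ => by simp [ha]
  obtain ⟨N, hN⟩ := eventuallyConst_atTop.1 (hleft.prodMk hright)
  refine ⟨N, fun n hn => ?_⟩
  simpa only [Prod.ext_iff, ← hS', ContinuousLinearMap.coe_list_prod_map_mul,
    ContinuousLinearMap.coe_list_prod_map_flip_mul] using hN n hn
end
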